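/- arXiv:1108.4750 — 4 statements merged into one kernel-verified Lean document; each statement's English description precedes it below -/
import Mathlib

section
/- Let (W,S) be a Coxeter system with J ⊆ S such that W_J is finite with longest element w_J. For w ∈ D_J and s ∈ S: s satisfies ℓ(s·ww_J) < ℓ(ww_J) if and only if either ℓ(sw) < ℓ(w), or ℓ(sw) > ℓ(w) and sw ∉ D_J. Equivalently, the left descent set L(ww_J) equals SD(w) ∪ WD_J(w), where SD(w) = {s | sw < w} and WD_J(w) = {s | sw > w, sw ∉ D_J}. -/
def CoxeterSystem.DJ {B W : Type*} [Group W] {M : CoxeterMatrix B}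
    (cs : CoxeterSystem M W) (J : Set B) : Set W :=
  {d : W | ∀ i ∈ J, cs.length d < cs.length (d * cs.simple i)}

/-!
Write `W_J` for the subgroup generated by `J`. Since `ℓ(w w_J) = ℓ w + ℓ w_J` for `w ∈ D_J`, a
left descent `s` of `w` is one of `w w_J`. If `s` is an ascent of `w` and `sw ∈ D_J`, the same
additivity for `sw` makes `s` an ascent of `w w_J`. Otherwise Deodhar's lemma gives `sw = w s'`
with `s' ∈ J`, and `s'` is a left descent of the longest element, so
`ℓ(s w w_J) = ℓ w + ℓ(s' w_J) < ℓ(w w_J)`.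

Additivity and Deodhar's lemma rest on the exchange condition, obtained from Tits' representation
of `W` on `W × ZMod 2`: the parity of the number of occurrences of `t` in the right inversion
sequence of a word depends only on the element the word represents. Hence a right descent `s` of
`π ω` occurs in the right inversion sequence of every word `ω`, as it occurs (once) in that of a
reduced word ending in `s`.
-/

theorem mul_mul_inv_eq_iff_eq_inv_mul_mul {G : Type*} [Group G] (g x c : G) :
    g * x * g⁻¹ = c ↔ x = g⁻¹ * c * g := by
  rw [mul_inv_eq_iff_eq_mul, mul_assoc, eq_inv_mul_iff_mul_eq]

namespace CoxeterSystem

variable {B W : Type*} [Group W] {M : CoxeterMatrix B} (cs : CoxeterSystem M W)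

local prefix:100 "s" => cs.simple
local prefix:100 "π" => cs.wordProd
local prefix:100 "ℓ" => cs.length
local prefix:100 "ris " => cs.rightInvSeq

theorem simple_mul_mul_simple_eq_iff (i : B) (t c : W) :
    s i * t * s i = c ↔ t = s i * c * s i := by
  constructor <;> rintro rfl <;> simp [mul_assoc]

theorem simple_mul_pow_mul_simple (i j : B) (k : ℕ) :
    s j * (s i * s j) ^ k * s j = ((s i * s j) ^ k)⁻¹ := by
  have h := conj_pow (a := s j) (b := s i * s j) (i := k)
  rw [cs.inv_simple] at h
  rw [← h, ← inv_pow]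
  simp [mul_assoc]

section ParityRepresentation

variable [DecidableEq W]

def parityPerm (i : B) : Equiv.Perm (W × ZMod 2) :=
  Function.Involutive.toPerm (fun p => (s i * p.1 * s i, p.2 + if p.1 = s i then 1 else 0)) <| by
    rintro ⟨t, e⟩
    simp only [simple_mul_mul_simple_eq_iff, simple_mul_simple_self, one_mul, add_assoc,
      ← two_mul]
    simp [mul_assoc, CharTwo.two_eq_zero]

theorem parityPerm_apply (i : B) (p : W × ZMod 2) :
    cs.parityPerm i p = (s i * p.1 * s i, p.2 + if p.1 = s i then 1 else 0) := rfl

theorem parityPerm_mul_parityPerm_apply (i j : B) (p : W × ZMod 2) :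
    (cs.parityPerm i * cs.parityPerm j) p =
      (s i * s j * p.1 * (s i * s j)⁻¹,
        p.2 + ((if p.1 = s j then 1 else 0) + if p.1 = s j * (s i * s j) then 1 else 0)) := by
  simp only [Equiv.Perm.mul_apply, parityPerm_apply, simple_mul_mul_simple_eq_iff]
  ext <;> simp [mul_assoc, add_assoc]

theorem parityPerm_mul_parityPerm_pow_apply (i j : B) (k : ℕ) (p : W × ZMod 2) :
    ((cs.parityPerm i * cs.parityPerm j) ^ k) p =
      ((s i * s j) ^ k * p.1 * ((s i * s j) ^ k)⁻¹,
        p.2 + ∑ l ∈ Finset.range (2 * k), if p.1 = s j * (s i * s j) ^ l then 1 else 0) := by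
  induction k with
  | zero => simp
  | succ k ih =>
    rw [pow_succ', Equiv.Perm.mul_apply, ih, parityPerm_mul_parityPerm_apply]
    set r := s i * s j
    have inv_pow_mul_simple : (r ^ k)⁻¹ * s j = s j * r ^ k := by
      rw [← cs.simple_mul_pow_mul_simple i j k, mul_assoc, simple_mul_simple_self, mul_one]
    have conj_simple : (r ^ k)⁻¹ * s j * r ^ k = s j * r ^ (2 * k) := by
      rw [inv_pow_mul_simple, mul_assoc, ← pow_add, two_mul]
    have conj_simple_mul : (r ^ k)⁻¹ * (s j * r) * r ^ k = s j * r ^ (2 * k + 1) := by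
      rw [← mul_assoc, inv_pow_mul_simple, mul_assoc, mul_assoc, ← pow_succ', ← pow_add]
      ring_nf
    ext
    · simp only [mul_inv_rev, pow_succ', mul_assoc]
    · simp only [mul_mul_inv_eq_iff_eq_inv_mul_mul, conj_simple, conj_simple_mul, Nat.mul_succ,
        Finset.sum_range_succ, add_assoc]

theorem isLiftable_parityPerm : M.IsLiftable cs.parityPerm := by
  intro i j
  ext1 p
  have hm : (s i * s j) ^ M i j = 1 := cs.simple_mul_simple_pow i j
  have periodic (l : ℕ) : s j * (s i * s j) ^ (M i j + l) = s j * (s i * s j) ^ l := by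
    rw [pow_add, hm, one_mul]
  rw [parityPerm_mul_parityPerm_pow_apply, two_mul, Finset.sum_range_add]
  simp only [periodic, CharTwo.add_self_eq_zero, add_zero, hm, one_mul, inv_one, mul_one,
    Equiv.Perm.one_apply]

def parityRep : W →* Equiv.Perm (W × ZMod 2) := cs.lift ⟨cs.parityPerm, cs.isLiftable_parityPerm⟩

theorem parityRep_wordProd (ω : List B) (p : W × ZMod 2) :
    cs.parityRep (π ω) p = (π ω * p.1 * (π ω)⁻¹, p.2 + (ris ω).count p.1) := by
  induction ω generalizing p with
  | nil => simp
  | cons i ω ih =>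
    rw [wordProd_cons, map_mul, Equiv.Perm.mul_apply, ih, parityRep, lift_apply_simple,
      parityPerm_apply]
    ext
    · simp [mul_assoc]
    · simp only [rightInvSeq, List.count_cons, beq_iff_eq, mul_mul_inv_eq_iff_eq_inv_mul_mul,
        eq_comm (a := p.1), Nat.cast_add, Nat.cast_ite, Nat.cast_one, Nat.cast_zero, add_assoc]

end ParityRepresentation

theorem count_rightInvSeq_eq_of_wordProd_eq [DecidableEq W] {ω ω' : List B} (h : π ω = π ω')
    (t : W) : ((ris ω).count t : ZMod 2) = (ris ω').count t := by
  have h₀ := cs.parityRep_wordProd ω (t, 0)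
  rw [h, cs.parityRep_wordProd ω' (t, 0)] at h₀
  simpa using (congrArg Prod.snd h₀).symm

theorem rightInvSeq_append (ω ω' : List B) :
    ris (ω ++ ω') = (ris ω).map (MulAut.conj (π ω')⁻¹) ++ ris ω' := by
  induction ω with
  | nil => simp
  | cons i ω ih =>
    simp [rightInvSeq, ih, wordProd_append, mul_assoc]

theorem simple_mem_rightInvSeq_of_isRightDescent {ω : List B} {j : B}
    (h : cs.IsRightDescent (π ω) j) : s j ∈ ris ω := by
  classical
  -- `ω' ++ [j]` is a reduced word for `π ω` whose right inversion sequence ends in `s j`.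
  obtain ⟨ω', hω', hprod⟩ := cs.exists_isReduced (π ω * s j)
  have hprod' : π (ω' ++ [j]) = π ω := by
    rw [wordProd_append, wordProd_singleton, ← hprod, simple_mul_simple_cancel_right]
  have hred : cs.IsReduced (ω' ++ [j]) := by
    have hdesc : ℓ (π ω * s j) + 1 = ℓ (π ω) := (cs.isRightDescent_iff.mp h)
    rw [IsReduced, hprod', List.length_append, List.length_singleton, ← hω'.eq, ← hprod, hdesc]
  have hcount : (ris (ω' ++ [j])).count (s j) = 1 :=
    List.count_eq_one_of_mem hred.nodup_rightInvSeq (by simp [rightInvSeq_append])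
  have hparity := cs.count_rightInvSeq_eq_of_wordProd_eq hprod' (s j)
  rw [hcount] at hparity
  refine List.count_pos_iff.mp (Nat.pos_of_ne_zero fun h0 => ?_)
  rw [h0] at hparity
  exact absurd hparity (by decide)

theorem exists_wordProd_eraseIdx_eq_mul_simple {ω : List B} {j : B}
    (h : cs.IsRightDescent (π ω) j) : ∃ k < ω.length, π (ω.eraseIdx k) = π ω * s j := by
  obtain ⟨k, hk, hget⟩ := List.mem_iff_getElem.mp (cs.simple_mem_rightInvSeq_of_isRightDescent h)
  refine ⟨k, by simpa using hk, ?_⟩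
  rw [← wordProd_mul_getD_rightInvSeq, List.getD_eq_getElem _ 1 hk, hget]

theorem length_mul_conj_lt_or_isRightDescent {x y : W} {j : B}
    (h : cs.IsRightDescent (x * y) j) :
    ℓ (x * (y * s j * y⁻¹)) < ℓ x ∨ cs.IsRightDescent y j := by
  obtain ⟨ωx, hωx, rfl⟩ := cs.exists_isReduced x
  obtain ⟨ωy, hωy, rfl⟩ := cs.exists_isReduced y
  rw [← wordProd_append] at h
  have hmem := cs.simple_mem_rightInvSeq_of_isRightDescent h
  rw [rightInvSeq_append, List.mem_append, List.mem_map] at hmem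
  rcases hmem with ⟨t, ht, hconj⟩ | hmem
  · left
    have : π ωy * s j * (π ωy)⁻¹ = t := by simp [← hconj, mul_assoc]
    exact this ▸ (cs.isRightInversion_of_mem_rightInvSeq hωx ht).2
  · exact Or.inr (cs.isRightInversion_of_mem_rightInvSeq hωy hmem).2

section Parabolic

variable {J : Set B}

theorem simple_mem_closure_image {j : B} (hj : j ∈ J) :
    s j ∈ Subgroup.closure (cs.simple '' J) :=
  Subgroup.subset_closure ⟨j, hj, rfl⟩

theorem exists_isReduced_wordProd_eq_mul_simple {ω : List B} (hωJ : ∀ b ∈ ω, b ∈ J)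
    (hω : cs.IsReduced ω) {j : B} (hj : j ∈ J) :
    ∃ ω' : List B, (∀ b ∈ ω', b ∈ J) ∧ cs.IsReduced ω' ∧ π ω' = π ω * s j := by
  rcases cs.length_mul_simple (π ω) j with hasc | hdesc
  · refine ⟨ω ++ [j], by simpa [or_imp, forall_and] using ⟨hωJ, hj⟩, ?_, ?_⟩
    · rw [IsReduced, wordProd_append, wordProd_singleton, hasc, hω.eq, List.length_append,
        List.length_singleton]
    · rw [wordProd_append, wordProd_singleton]
  · obtain ⟨k, hk, hprod⟩ :=
      cs.exists_wordProd_eraseIdx_eq_mul_simple (cs.isRightDescent_iff.mpr hdesc)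
    refine ⟨ω.eraseIdx k, fun b hb => hωJ b (List.mem_of_mem_eraseIdx hb), ?_, hprod⟩
    have := List.length_eraseIdx_add_one hk
    rw [hω.eq] at hdesc
    rw [IsReduced, hprod]
    omega

theorem exists_isReduced_of_mem_closure {u : W} (hu : u ∈ Subgroup.closure (cs.simple '' J)) :
    ∃ ω : List B, (∀ b ∈ ω, b ∈ J) ∧ cs.IsReduced ω ∧ π ω = u := by
  induction hu using Subgroup.closure_induction_right with
  | one => exact ⟨[], by simp, by simp [IsReduced], rfl⟩
  | mul_right u _ _ hj ih =>
    obtain ⟨j, hj, rfl⟩ := hj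
    obtain ⟨ω, hωJ, hω, rfl⟩ := ih
    exact cs.exists_isReduced_wordProd_eq_mul_simple hωJ hω hj
  | mul_inv_cancel u _ _ hj ih =>
    obtain ⟨j, hj, rfl⟩ := hj
    obtain ⟨ω, hωJ, hω, rfl⟩ := ih
    rw [inv_simple]
    exact cs.exists_isReduced_wordProd_eq_mul_simple hωJ hω hj

theorem exists_isRightDescent_of_mem_closure {u : W}
    (hu : u ∈ Subgroup.closure (cs.simple '' J)) (hu₁ : u ≠ 1) :
    ∃ j ∈ J, cs.IsRightDescent u j := by
  obtain ⟨ω, hωJ, hω, rfl⟩ := cs.exists_isReduced_of_mem_closure hu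
  obtain ⟨ω, j, rfl⟩ := (List.eq_nil_or_concat' ω).resolve_left (by rintro rfl; simp at hu₁)
  refine ⟨j, hωJ j (by simp), ?_⟩
  rw [IsRightDescent, hω.eq, wordProd_append, wordProd_singleton, simple_mul_simple_cancel_right]
  calc ℓ (π ω) ≤ ω.length := cs.length_wordProd_le ω
    _ < (ω ++ [j]).length := by simp

theorem length_mul_eq_add_of_forall_length_le {d u : W}
    (hmin : ∀ v ∈ Subgroup.closure (cs.simple '' J), ℓ d ≤ ℓ (d * v))
    (hu : u ∈ Subgroup.closure (cs.simple '' J)) : ℓ (d * u) = ℓ d + ℓ u := by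
  have step (u : W) (hu : u ∈ Subgroup.closure (cs.simple '' J)) {j : B} (hj : j ∈ J)
      (ih : ℓ (d * u) = ℓ d + ℓ u) : ℓ (d * (u * s j)) = ℓ d + ℓ (u * s j) := by
    rw [← mul_assoc]
    rcases cs.length_mul_simple u j with hasc | hdesc
    · rcases cs.length_mul_simple (d * u) j with h | h
      · omega
      · rcases cs.length_mul_conj_lt_or_isRightDescent (cs.isRightDescent_iff.mpr h) with h' | h'
        · exact absurd (hmin _ (mul_mem (mul_mem hu (cs.simple_mem_closure_image hj))
            (inv_mem hu))) (not_le.mpr h')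
        · exact absurd (cs.isRightDescent_iff.mp h') (by omega)
    · have := cs.length_mul_le d (u * s j)
      rw [← mul_assoc] at this
      rcases cs.length_mul_simple (d * u) j with h | h <;> omega
  induction hu using Subgroup.closure_induction_right with
  | one => simp
  | mul_right u hu _ hj ih =>
    obtain ⟨j, hj, rfl⟩ := hj
    exact step u hu hj ih
  | mul_inv_cancel u hu _ hj ih =>
    obtain ⟨j, hj, rfl⟩ := hj
    rw [inv_simple]
    exact step u hu hj ih

/-- Lengths add on the right of an element `w * v` of minimal length in `w W_J`; so if `v ≠ 1`, a
right descent of `v⁻¹` in `J` would be one of `w = (w * v) * v⁻¹`. -/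
theorem length_mul_of_mem_DJ {w u : W} (hw : w ∈ cs.DJ J)
    (hu : u ∈ Subgroup.closure (cs.simple '' J)) : ℓ (w * u) = ℓ w + ℓ u := by
  obtain ⟨v, hmin⟩ := exists_minimalFor_of_wellFoundedLT
    (· ∈ Subgroup.closure (cs.simple '' J)) (fun v => ℓ (w * v)) ⟨1, one_mem _⟩
  have hv : v ∈ Subgroup.closure (cs.simple '' J) := hmin.1
  have hadd (u : W) (hu : u ∈ Subgroup.closure (cs.simple '' J)) :
      ℓ (w * v * u) = ℓ (w * v) + ℓ u :=
    cs.length_mul_eq_add_of_forall_length_le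
      (fun u hu => by rw [mul_assoc]; exact hmin.le (mul_mem hv hu)) hu
  have hv₁ : v⁻¹ = 1 := by
    by_contra hne
    obtain ⟨j, hj, hdesc⟩ := cs.exists_isRightDescent_of_mem_closure (inv_mem hv) hne
    have h₁ := hadd v⁻¹ (inv_mem hv)
    have h₂ := hadd (v⁻¹ * s j) (mul_mem (inv_mem hv) (cs.simple_mem_closure_image hj))
    rw [mul_inv_cancel_right] at h₁
    rw [← mul_assoc, mul_inv_cancel_right] at h₂
    have := hw j hj
    unfold IsRightDescent at hdesc
    omega
  rw [inv_eq_one.mp hv₁, mul_one] at hadd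
  exact hadd u hu

theorem exists_simple_mul_eq_mul_simple_of_not_mem_DJ {w : W} (hw : w ∈ cs.DJ J) {i : B}
    (hasc : ℓ w < ℓ (s i * w)) (hnot : s i * w ∉ cs.DJ J) : ∃ j ∈ J, s i * w = w * s j := by
  simp only [DJ, Set.mem_ofPred_eq, not_forall, not_lt] at hnot
  obtain ⟨j, hj, hle⟩ := hnot
  refine ⟨j, hj, ?_⟩
  have hdesc : cs.IsRightDescent (s j * w⁻¹) i := by
    have h₁ : s j * w⁻¹ * s i = (s i * w * s j)⁻¹ := by simp [mul_assoc]
    have h₂ : s j * w⁻¹ = (w * s j)⁻¹ := by simp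
    rw [IsRightDescent, h₁, h₂, length_inv, length_inv]
    have := hw j hj
    have := cs.length_mul_simple_ne (s i * w) j
    rcases cs.length_simple_mul w i with h | h <;> omega
  -- Exchange: either `s j = w⁻¹ * s i * w`, or `i` is a right descent of `w⁻¹`.
  rcases cs.length_mul_conj_lt_or_isRightDescent hdesc with h | h
  · rw [length_simple, Nat.lt_one_iff, length_eq_zero_iff] at h
    rw [inv_inv, mul_eq_one_iff_inv_eq, inv_simple] at h
    rw [h]
    group
  · rw [IsRightDescent, ← length_inv, mul_inv_rev, inv_inv, inv_simple, length_inv] at h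
    omega

theorem isLeftDescent_of_forall_length_le {wJ : W}
    (hwJ : wJ ∈ Subgroup.closure (cs.simple '' J))
    (hlong : ∀ u ∈ Subgroup.closure (cs.simple '' J), ℓ u ≤ ℓ wJ) {j : B} (hj : j ∈ J) :
    cs.IsLeftDescent wJ j :=
  lt_of_le_of_ne (hlong _ (mul_mem (cs.simple_mem_closure_image hj) hwJ))
    (cs.length_simple_mul_ne wJ j)

end Parabolic

end CoxeterSystem

theorem leftDescent_mul_longest_iff_general {B W : Type*} [Group W] {M : CoxeterMatrix B}
    (cs : CoxeterSystem M W) (J : Set B) (wJ : W)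
    (hwJmem : wJ ∈ Subgroup.closure (cs.simple '' J))
    (hwJlong : ∀ u ∈ Subgroup.closure (cs.simple '' J), cs.length u ≤ cs.length wJ)
    (w : W) (hw : w ∈ cs.DJ J) (i : B) :
    cs.length (cs.simple i * (w * wJ)) < cs.length (w * wJ) ↔
      (cs.length (cs.simple i * w) < cs.length w ∨
        (cs.length w < cs.length (cs.simple i * w) ∧ cs.simple i * w ∉ cs.DJ J)) := by
  have hwwJ := cs.length_mul_of_mem_DJ hw hwJmem
  rcases lt_or_gt_of_ne (cs.length_simple_mul_ne w i) with hdesc | hasc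
  · refine iff_of_true ?_ (Or.inl hdesc)
    have := cs.length_mul_le (cs.simple i * w) wJ
    rw [← mul_assoc]
    omega
  by_cases hD : cs.simple i * w ∈ cs.DJ J
  · refine iff_of_false ?_ (by rintro (h | ⟨-, h⟩) <;> [omega; exact h hD])
    rw [← mul_assoc, cs.length_mul_of_mem_DJ hD hwJmem]
    omega
  · obtain ⟨j, hj, hij⟩ := cs.exists_simple_mul_eq_mul_simple_of_not_mem_DJ hw hasc hD
    refine iff_of_true ?_ (Or.inr ⟨hasc, hD⟩)
    have := cs.isLeftDescent_of_forall_length_le hwJmem hwJlong hj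
    rw [← mul_assoc, hij, mul_assoc,
      cs.length_mul_of_mem_DJ hw (mul_mem (cs.simple_mem_closure_image hj) hwJmem), hwwJ]
    exact Nat.add_lt_add_left this _

/-- Let `W_J` be finite with longest element `wJ`.  For `w ∈ D_J` and a simple
reflection `s`, we have `ℓ(s·w·wJ) < ℓ(w·wJ)` iff either `ℓ(sw) < ℓ(w)`, or
`ℓ(sw) > ℓ(w)` and `sw ∉ D_J`.  That is, the left descent set of `w·wJ` is
`SD(w) ∪ WD_J(w)`. -/
theorem leftDescent_mul_longest_iff {B W : Type*} [Group W] {M : CoxeterMatrix B}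
    (cs : CoxeterSystem M W) (J : Set B) (wJ : W)
    (hfin : (Subgroup.closure (cs.simple '' J) : Set W).Finite)
    (hwJmem : wJ ∈ Subgroup.closure (cs.simple '' J))
    (hwJlong : ∀ u ∈ Subgroup.closure (cs.simple '' J), cs.length u ≤ cs.length wJ)
    (w : W) (hw : w ∈ cs.DJ J) (i : B) :
    cs.length (cs.simple i * (w * wJ)) < cs.length (w * wJ) ↔
      (cs.length (cs.simple i * w) < cs.length w ∨
        (cs.length w < cs.length (cs.simple i * w) ∧ cs.simple i * w ∉ cs.DJ J)) :=
  leftDescent_mul_longest_iff_general cs J wJ hwJmem hwJlong w hw i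
end

section
/- Let λ be a partition of n, tab_λ the column superstandard tableau, and tab^λ the row superstandard tableau (filling rows in order left to right). Define v_λ ∈ S_n by tab^λ = v_λ·tab_λ. Then a λ-tableau t = w·tab_λ is standard (rows and columns both increasing) if and only if w ≤_L v_λ in the left weak Bruhat order on S_n. -/
def IsColSuperstandard (μ : YoungDiagram) (n : ℕ)
    (t : {c // c ∈ μ.cells} ≃ Fin n) : Prop :=
  ∀ c : {c // c ∈ μ.cells},
    ((t c : Fin n) : ℕ) = (∑ h ∈ Finset.range c.1.2, μ.colLen h) + c.1.1

/-- `t` is the row superstandard tableau `tab^λ`: rows are filled in order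
from left to right. -/
def IsRowSuperstandard (μ : YoungDiagram) (n : ℕ)
    (t : {c // c ∈ μ.cells} ≃ Fin n) : Prop :=
  ∀ c : {c // c ∈ μ.cells},
    ((t c : Fin n) : ℕ) = (∑ h ∈ Finset.range c.1.1, μ.rowLen h) + c.1.2

def invLen {n : ℕ} (w : Equiv.Perm (Fin n)) : ℕ :=
  (Finset.univ.filter fun p : Fin n × Fin n => p.1 < p.2 ∧ w p.2 < w p.1).card

/-- The left weak Bruhat order on `S_n`: `u ≤_L w` iff `ℓ(w u⁻¹) + ℓ(u) = ℓ(w)`. -/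
def LeftWeakLE {n : ℕ} (u w : Equiv.Perm (Fin n)) : Prop :=
  invLen (w * u⁻¹) + invLen u = invLen w

/-- A standard tableau: entries increase along rows and down columns. -/
def IsStandard (μ : YoungDiagram) (n : ℕ)
    (t : {c // c ∈ μ.cells} ≃ Fin n) : Prop :=
  (∀ c c' : {c // c ∈ μ.cells}, (c.1).1 = (c'.1).1 → (c.1).2 < (c'.1).2 → t c < t c') ∧
  (∀ c c' : {c // c ∈ μ.cells}, (c.1).2 = (c'.1).2 → (c.1).1 < (c'.1).1 → t c < t c')

/-!
Number the cells by the column reading word, so that pairs `i < j` in `Fin n` correspond to pairs of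
cells `c, c'` with `c` first in column reading order. The tableau `w · tab_λ` inverts such a pair
iff `w` inverts `(i, j)`, and `v_λ` inverts it iff `c'` comes first in row reading order. The pairs
ordered alike by both reading orders are exactly those with `c` weakly north-west of `c'`, and a
tableau is standard iff it is strictly monotone for that product order. So standardness means
`inv(w) ⊆ inv(v_λ)`, which is the left weak order, because `ℓ(v u⁻¹) = |inv(u) △ inv(v)|`.
-/
open Finset

section WeakOrder

variable {n : ℕ}

def inversions (w : Equiv.Perm (Fin n)) : Finset (Fin n × Fin n) :=
  {p | p.1 < p.2 ∧ w p.2 < w p.1}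

lemma invLen_eq_card_inversions (w : Equiv.Perm (Fin n)) : invLen w = #(inversions w) := rfl

lemma invLen_mul_inv (u v : Equiv.Perm (Fin n)) :
    invLen (v * u⁻¹) = #(inversions v \ inversions u) + #(inversions u \ inversions v) := by
  have hreindex : invLen (v * u⁻¹) = #{p : Fin n × Fin n | u p.1 < u p.2 ∧ v p.2 < v p.1} :=
    card_equiv (u.symm.prodCongr u.symm) fun q => by
      simp only [mem_filter, mem_univ, true_and]
      simp [Equiv.Perm.inv_def]
  -- split the pairs by `p.1 < p.2`; the others are swapped into `inversions u \ inversions v`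
  rw [hreindex, ← card_filter_add_card_filter_not (fun p : Fin n × Fin n => p.1 < p.2)]
  congr 1
  · congr 1
    ext p
    simp only [inversions, mem_filter, mem_sdiff, mem_univ, true_and]
    have hu : u p.1 ≠ u p.2 ↔ p.1 ≠ p.2 := u.injective.ne_iff
    grind
  · refine card_equiv (Equiv.prodComm _ _) fun p => ?_
    simp only [inversions, mem_filter, mem_sdiff, mem_univ, true_and, Equiv.prodComm_apply,
      Prod.fst_swap, Prod.snd_swap]
    have hv : v p.1 ≠ v p.2 ↔ p.1 ≠ p.2 := v.injective.ne_iff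
    grind

lemma leftWeakLE_iff_inversions_subset (u v : Equiv.Perm (Fin n)) :
    LeftWeakLE u v ↔ inversions u ⊆ inversions v := by
  have hu := card_sdiff_add_card_inter (inversions u) (inversions v)
  have hv := card_sdiff_add_card_inter (inversions v) (inversions u)
  rw [inter_comm] at hv
  rw [LeftWeakLE, invLen_mul_inv, invLen_eq_card_inversions, invLen_eq_card_inversions,
    ← sdiff_eq_empty_iff_subset, ← card_eq_zero]
  omega

lemma leftWeakLE_iff_forall_lt (u v : Equiv.Perm (Fin n)) :
    LeftWeakLE u v ↔ ∀ i j, i < j → v i < v j → u i < u j := by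
  rw [leftWeakLE_iff_inversions_subset]
  refine ⟨fun h i j hij hvij => ?_, fun h p hp => ?_⟩
  · have hinv := @h (i, j)
    simp only [inversions, mem_filter, mem_univ, true_and] at hinv
    have hu : u i ≠ u j ↔ i ≠ j := u.injective.ne_iff
    grind
  · simp only [inversions, mem_filter, mem_univ, true_and] at hp ⊢
    have hvp := h p.1 p.2 hp.1
    have hv : v p.1 ≠ v p.2 ↔ p.1 ≠ p.2 := v.injective.ne_iff
    grind

end WeakOrder

lemma Prod.lt_iff_toLex_swap_lt_and_toLex_lt {α β : Type*} [LinearOrder α] [LinearOrder β]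
    {p q : α × β} : p < q ↔ toLex p.swap < toLex q.swap ∧ toLex p < toLex q := by
  simp only [Prod.lt_iff, Prod.Lex.toLex_lt_toLex, Prod.fst_swap, Prod.snd_swap]
  grind

lemma lt_iff_lt_of_injective_of_forall_lt {α β γ : Type*} [LinearOrder β] [Preorder γ]
    {f : α → β} {g : α → γ} (hf : Function.Injective f) (h : ∀ a b, f a < f b → g a < g b)
    (a b : α) : g a < g b ↔ f a < f b := by
  refine ⟨fun hg => ?_, h a b⟩
  have hab : a ≠ b := by rintro rfl; exact lt_irrefl _ hg
  exact (hf.ne hab).lt_or_gt.resolve_right fun hfba => lt_asymm hg (h b a hfba)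

lemma sum_range_add_lt_sum_range_add {len : ℕ → ℕ} {i j i' j' : ℕ} (hj : j < len i)
    (h : toLex (i, j) < toLex (i', j')) :
    ∑ k ∈ range i, len k + j < ∑ k ∈ range i', len k + j' := by
  simp only [Prod.Lex.toLex_lt_toLex] at h
  rcases h with hi | ⟨rfl, hj'⟩
  · have : ∑ k ∈ range (i + 1), len k ≤ ∑ k ∈ range i', len k :=
      sum_le_sum_of_subset (range_subset_range.2 hi)
    rw [sum_range_succ] at this
    omega
  · omega

section Tableau

variable {μ : YoungDiagram} {n : ℕ} {t : {c // c ∈ μ.cells} ≃ Fin n}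

lemma IsRowSuperstandard.lt_iff (ht : IsRowSuperstandard μ n t) (c c' : {c // c ∈ μ.cells}) :
    t c < t c' ↔ toLex c.1 < toLex c'.1 :=
  lt_iff_lt_of_injective_of_forall_lt (toLex.injective.comp Subtype.val_injective)
    (fun c c' h => by
      rw [Fin.lt_def, ht, ht]
      exact sum_range_add_lt_sum_range_add
        (YoungDiagram.mem_iff_lt_rowLen.1 ((YoungDiagram.mem_cells _).1 c.2)) h) c c'

lemma IsColSuperstandard.lt_iff (ht : IsColSuperstandard μ n t) (c c' : {c // c ∈ μ.cells}) :
    t c < t c' ↔ toLex c.1.swap < toLex c'.1.swap :=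
  lt_iff_lt_of_injective_of_forall_lt
    (toLex.injective.comp (Prod.swap_injective.comp Subtype.val_injective))
    (fun c c' h => by
      rw [Fin.lt_def, ht, ht]
      exact sum_range_add_lt_sum_range_add
        (YoungDiagram.mem_iff_lt_colLen.1 ((YoungDiagram.mem_cells _).1 c.2)) h) c c'

lemma isStandard_iff_strictMono : IsStandard μ n t ↔ StrictMono t := by
  constructor
  · rintro ⟨hrow, hcol⟩ c c' hlt
    have hrow' (c c' : {c // c ∈ μ.cells}) (h₁ : c.1.1 = c'.1.1) (h₂ : c.1.2 ≤ c'.1.2) :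
        t c ≤ t c' :=
      h₂.lt_or_eq.elim (fun h => (hrow c c' h₁ h).le)
        fun h => (congrArg t (Subtype.ext (Prod.ext h₁ h))).le
    have hcol' (c c' : {c // c ∈ μ.cells}) (h₂ : c.1.2 = c'.1.2) (h₁ : c.1.1 ≤ c'.1.1) :
        t c ≤ t c' :=
      h₁.lt_or_eq.elim (fun h => (hcol c c' h₂ h).le)
        fun h => (congrArg t (Subtype.ext (Prod.ext h h₂))).le
    have hle : c.1 ≤ c'.1 := hlt.le
    let corner : {c // c ∈ μ.cells} :=
      ⟨(c.1.1, c'.1.2), (YoungDiagram.mem_cells _).2 (μ.up_left_mem hle.1 le_rfl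
        ((YoungDiagram.mem_cells _).1 c'.2))⟩
    exact lt_of_le_of_ne ((hrow' c corner rfl hle.2).trans (hcol' corner c' rfl hle.1))
      (t.injective.ne hlt.ne)
  · intro ht
    exact ⟨fun c c' h₁ h₂ => ht (Subtype.coe_lt_coe.1 (Prod.lt_iff.2 (Or.inr ⟨h₁.le, h₂⟩))),
      fun c c' h₂ h₁ => ht (Subtype.coe_lt_coe.1 (Prod.lt_iff.2 (Or.inl ⟨h₁, h₂.le⟩)))⟩

end Tableau

theorem standard_iff_leftWeak_le_vlambda_general (μ : YoungDiagram) (n : ℕ)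
    (tcol trow : {c // c ∈ μ.cells} ≃ Fin n)
    (htcol : IsColSuperstandard μ n tcol) (htrow : IsRowSuperstandard μ n trow)
    (vlam : Equiv.Perm (Fin n)) (hv : trow = tcol.trans vlam)
    (w : Equiv.Perm (Fin n)) :
    IsStandard μ n (tcol.trans w) ↔ LeftWeakLE w vlam := by
  have hvlam : ∀ c, vlam (tcol c) = trow c := by simp [hv]
  rw [isStandard_iff_strictMono, leftWeakLE_iff_forall_lt, tcol.surjective.forall₂]
  simp only [hvlam, htcol.lt_iff, htrow.lt_iff, StrictMono, ← Subtype.coe_lt_coe,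
    Prod.lt_iff_toLex_swap_lt_and_toLex_lt, and_imp, Equiv.trans_apply]

/-- `w · tab_λ` is standard iff `w ≤_L v_λ`, where `v_λ` is defined by
`tab^λ = v_λ · tab_λ`. -/
theorem standard_iff_leftWeak_le_vlambda (μ : YoungDiagram) (n : ℕ)
    (hcard : μ.card = n) (tcol trow : {c // c ∈ μ.cells} ≃ Fin n)
    (htcol : IsColSuperstandard μ n tcol) (htrow : IsRowSuperstandard μ n trow)
    (vlam : Equiv.Perm (Fin n)) (hv : trow = tcol.trans vlam)
    (w : Equiv.Perm (Fin n)) :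
    IsStandard μ n (tcol.trans w) ↔ LeftWeakLE w vlam :=
  standard_iff_leftWeak_le_vlambda_general μ n tcol trow htcol htrow vlam hv w
end

section
/- Let λ be a partition of n with conjugate λ'. Let w ∈ S_n and suppose the Robinson-Schensted recording tableau Q(w) equals tab_λ (the column superstandard tableau). Then w(1) > w(2) > ⋯ > w(λ'_1), w(λ'_1+1) > ⋯ > w(λ'_1+λ'_2), and so on: w is strictly decreasing on each consecutive block of sizes λ'_1, λ'_2, …. -/
/-- Row insertion of `x` into a row: returns the new row and the bumped entry,
if any. -/
def insRow : List ℕ → ℕ → List ℕ × Option ℕ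
  | [], x => ([x], none)
  | a :: as, x =>
      if x < a then (x :: as, some a)
      else
        let p := insRow as x
        (a :: p.1, p.2)

/-- Robinson–Schensted row insertion of `x` into a tableau (list of rows). -/
def insertT : List (List ℕ) → ℕ → List (List ℕ)
  | [], x => [[x]]
  | r :: rs, x =>
      match insRow r x with
      | (r', none) => r' :: rs
      | (r', some b) => r' :: insertT rs b

/-- Add the label `k` to the recording tableau `q` in the unique new box of the
shape `sh` (the shape of the insertion tableau after the current insertion). -/
def addRec : List (List ℕ) → List ℕ → ℕ → List (List ℕ)
  | [], _, k => [[k]]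
  | _ :: _, [], k => [[k]]
  | r :: rs, s :: ss, k =>
      if r.length < s then (r ++ [k]) :: rs else r :: addRec rs ss k

/-- The Robinson–Schensted correspondence: `RS w = (P(w), Q(w))`, obtained by
row-inserting the entries of the word `w` in order, recording with `1, 2, …`. -/
def RS (w : List ℕ) : List (List ℕ) × List (List ℕ) :=
  (((List.range w.length).map (· + 1)).zip w).foldl
    (fun pq kx =>
      let p' := insertT pq.1 kx.2
      (p', addRec pq.2 (p'.map List.length) kx.1))
    ([], [])

/-- The word (in one-line notation, entries `1, …, n`) of a permutation. -/
def wordOf {n : ℕ} (w : Equiv.Perm (Fin n)) : List ℕ :=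
  (List.finRange n).map fun k => (w k : ℕ) + 1

/-- `λ'_j`: the number of parts of `l` that exceed `j` (the conjugate
partition). -/
def conjC (l : List ℕ) (j : ℕ) : ℕ := (l.filter fun x => j < x).length

/-- `Σ_{h < j} λ'_h`: the number of entries preceding column `j` of the column
superstandard tableau. -/
def colStart (l : List ℕ) (j : ℕ) : ℕ := ((List.range j).map (conjC l)).sum

/-- The column superstandard tableau `tab_λ` (rows as lists): the entry in
cell `(i, j)` is `colStart l j + i + 1`, so columns are filled `1, 2, …`
in order from top to bottom. -/
def tabColList (l : List ℕ) : List (List ℕ) :=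
  (List.range l.length).map fun i =>
    (List.range (l.getD i 0)).map fun j => colStart l j + i + 1

/-!
In `tab_λ` the labels `m + 1` and `m + 2` of one column lie in consecutive rows `i` and `i + 1`.
Hence, when the letters `x = w(m+1)` and then `y = w(m+2)` are row-inserted, the new box created
by `y` lies strictly below the one created by `x`. By the row bumping lemma this forces `y < x`:
if `x ≤ y`, then in every row the entry bumped by `y` is at least the one bumped by `x`, so the
bumping path of `y` stops no lower than that of `x`.
-/

namespace RobinsonSchensted

section RowInsertion

variable {r : List ℕ} {x y : ℕ}

lemma insRow_cons_of_lt {a : ℕ} (as : List ℕ) (h : x < a) :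
    insRow (a :: as) x = (x :: as, some a) := by
  simp [insRow, h]

lemma insRow_cons_of_le {a : ℕ} (as : List ℕ) (h : a ≤ x) :
    insRow (a :: as) x = (a :: (insRow as x).1, (insRow as x).2) := by
  simp [insRow, h.not_gt]

lemma mem_insRow_fst {e : ℕ} (he : e ∈ (insRow r x).1) : e = x ∨ e ∈ r := by
  induction r with
  | nil => simpa [insRow] using he
  | cons a as ih =>
    rcases lt_or_ge x a with h | h
    · rw [insRow_cons_of_lt as h, List.mem_cons] at he
      rcases he with rfl | he
      · simp
      · simp [he]
    · rw [insRow_cons_of_le as h, List.mem_cons] at he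
      rcases he with rfl | he
      · simp
      · rcases ih he with h' | h' <;> simp [h']

lemma mem_of_insRow_snd_eq_some {b : ℕ} (h : (insRow r x).2 = some b) : b ∈ r := by
  induction r with
  | nil => simp [insRow] at h
  | cons a as ih =>
    rcases lt_or_ge x a with hx | hx
    · rw [insRow_cons_of_lt as hx, Option.some_inj] at h
      simp [h]
    · rw [insRow_cons_of_le as hx] at h
      exact List.mem_cons_of_mem _ (ih h)

lemma pairwise_insRow_fst (hs : r.Pairwise (· ≤ ·)) (x : ℕ) :
    (insRow r x).1.Pairwise (· ≤ ·) := by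
  induction r with
  | nil => simp [insRow]
  | cons a as ih =>
    rw [List.pairwise_cons] at hs
    rcases lt_or_ge x a with h | h
    · rw [insRow_cons_of_lt as h, List.pairwise_cons]
      exact ⟨fun b hb => h.le.trans (hs.1 b hb), hs.2⟩
    · rw [insRow_cons_of_le as h, List.pairwise_cons]
      refine ⟨fun b hb => ?_, ih hs.2⟩
      rcases mem_insRow_fst hb with rfl | hb
      exacts [h, hs.1 b hb]

lemma length_insRow_fst (r : List ℕ) (x : ℕ) :
    (insRow r x).1.length = r.length + if (insRow r x).2 = none then 1 else 0 := by
  induction r with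
  | nil => simp [insRow]
  | cons a as ih =>
    rcases lt_or_ge x a with h | h
    · simp [insRow_cons_of_lt as h]
    · simp [insRow_cons_of_le as h, ih]
      omega

lemma exists_bump_le_of_le (hs : r.Pairwise (· ≤ ·)) (hxy : x ≤ y) {y' : ℕ}
    (hy : (insRow (insRow r x).1 y).2 = some y') :
    ∃ x', (insRow r x).2 = some x' ∧ x' ≤ y' := by
  induction r generalizing x y with
  | nil => simp [insRow, hxy.not_gt] at hy
  | cons a as ih =>
    rw [List.pairwise_cons] at hs
    rcases lt_or_ge x a with h | h
    · rw [insRow_cons_of_lt as h, insRow_cons_of_le as hxy] at hy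
      exact ⟨a, by rw [insRow_cons_of_lt as h], hs.1 y' (mem_of_insRow_snd_eq_some hy)⟩
    · rw [insRow_cons_of_le as h] at hy ⊢
      rw [insRow_cons_of_le _ (h.trans hxy)] at hy
      exact ih hs.2 hxy hy

end RowInsertion

/-- The row in which `insertT P x` creates its new box. -/
def newRow : List (List ℕ) → ℕ → ℕ
  | [], _ => 0
  | r :: rs, x =>
      match (insRow r x).2 with
      | none => 0
      | some b => newRow rs b + 1

def appendToRow : List (List ℕ) → ℕ → ℕ → List (List ℕ)
  | [], _, k => [[k]]
  | r :: rs, 0, k => (r ++ [k]) :: rs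
  | r :: rs, i + 1, k => r :: appendToRow rs i k

section Insertion

variable {P : List (List ℕ)} {x y : ℕ}

lemma insertT_newRow_cons_of_insRow_eq_none {r r' : List ℕ} (h : insRow r x = (r', none))
    (rs : List (List ℕ)) : insertT (r :: rs) x = r' :: rs ∧ newRow (r :: rs) x = 0 := by
  simp [insertT, newRow, h]

lemma insertT_newRow_cons_of_insRow_eq_some {r r' : List ℕ} {b : ℕ} (h : insRow r x = (r', some b))
    (rs : List (List ℕ)) :
    insertT (r :: rs) x = r' :: insertT rs b ∧ newRow (r :: rs) x = newRow rs b + 1 := by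
  simp [insertT, newRow, h]

lemma pairwise_of_mem_insertT (hs : ∀ r ∈ P, r.Pairwise (· ≤ ·)) (x : ℕ) :
    ∀ r ∈ insertT P x, r.Pairwise (· ≤ ·) := by
  induction P generalizing x with
  | nil => simp [insertT]
  | cons r rs ih =>
    have hr' := pairwise_insRow_fst (hs r List.mem_cons_self) x
    have hrs : ∀ t ∈ rs, t.Pairwise (· ≤ ·) := fun t ht => hs t (List.mem_cons_of_mem _ ht)
    rcases h : insRow r x with ⟨r', _ | b⟩ <;> rw [h] at hr'
    · rw [(insertT_newRow_cons_of_insRow_eq_none h rs).1]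
      simpa using ⟨hr', hrs⟩
    · rw [(insertT_newRow_cons_of_insRow_eq_some h rs).1]
      simpa using ⟨hr', ih hrs b⟩

lemma newRow_le_length (P : List (List ℕ)) (x : ℕ) : newRow P x ≤ P.length := by
  induction P generalizing x with
  | nil => rfl
  | cons r rs ih =>
    rcases h : insRow r x with ⟨r', _ | b⟩
    · simp [(insertT_newRow_cons_of_insRow_eq_none h rs).2]
    · simpa [(insertT_newRow_cons_of_insRow_eq_some h rs).2] using ih b

/-- The row bumping lemma (Fulton, *Young Tableaux*, §1.1). -/
theorem newRow_insertT_le (hs : ∀ r ∈ P, r.Pairwise (· ≤ ·)) (hxy : x ≤ y) :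
    newRow (insertT P x) y ≤ newRow P x := by
  induction P generalizing x y with
  | nil => simp [insertT, newRow, insRow, hxy.not_gt]
  | cons r rs ih =>
    have hr := hs r List.mem_cons_self
    have hrs : ∀ t ∈ rs, t.Pairwise (· ≤ ·) := fun t ht => hs t (List.mem_cons_of_mem _ ht)
    rcases h : insRow r x with ⟨r', _ | b⟩
    · obtain ⟨hins, hrow⟩ := insertT_newRow_cons_of_insRow_eq_none h rs
      rw [hins, hrow]
      rcases hy : (insRow r' y).2 with _ | y'
      · simp [newRow, hy]
      · obtain ⟨_, hb, _⟩ := exists_bump_le_of_le hr hxy (by rw [h]; exact hy)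
        simp [h] at hb
    · obtain ⟨hins, hrow⟩ := insertT_newRow_cons_of_insRow_eq_some h rs
      rw [hins, hrow]
      rcases hy : (insRow r' y).2 with _ | y'
      · simp [newRow, hy]
      · obtain ⟨_, hb, hby'⟩ := exists_bump_le_of_le hr hxy (by rw [h]; exact hy)
        rw [h, Option.some_inj] at hb
        subst hb
        simpa [newRow, hy] using ih hrs hby'

end Insertion

section Recording

variable {P Q : List (List ℕ)}

lemma getD_isPrefix_getD_appendToRow (Q : List (List ℕ)) (i₀ k i : ℕ) :
    Q.getD i [] <+: (appendToRow Q i₀ k).getD i [] := by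
  induction Q generalizing i₀ i with
  | nil => simp
  | cons r rs ih =>
    cases i₀ <;> cases i <;>
      simp only [appendToRow, List.getD_cons_zero, List.getD_cons_succ, List.prefix_append,
        List.prefix_refl, ih]

lemma mem_getD_appendToRow {i : ℕ} (hi : i ≤ Q.length) (k : ℕ) :
    k ∈ (appendToRow Q i k).getD i [] := by
  induction Q generalizing i with
  | nil => simp_all [appendToRow]
  | cons r rs ih =>
    cases i with
    | zero => simp [appendToRow]
    | succ i => simpa [appendToRow] using ih (by simpa using hi)

theorem addRec_insertT (hQ : Q.map List.length = P.map List.length) (x k : ℕ) :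
    addRec Q ((insertT P x).map List.length) k = appendToRow Q (newRow P x) k ∧
    (appendToRow Q (newRow P x) k).map List.length = (insertT P x).map List.length := by
  induction P generalizing Q x with
  | nil =>
    obtain rfl : Q = [] := by simpa using hQ
    simp [insertT, addRec, appendToRow]
  | cons r rs ih =>
    obtain ⟨q, qs, rfl⟩ : ∃ q qs, Q = q :: qs := List.exists_cons_of_length_eq_add_one
      (by simpa using congrArg List.length hQ)
    simp only [List.map_cons, List.cons.injEq] at hQ
    have hlen := length_insRow_fst r x
    rcases h : insRow r x with ⟨r', _ | b⟩ <;> rw [h] at hlen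
    · obtain ⟨hins, hrow⟩ := insertT_newRow_cons_of_insRow_eq_none h rs
      simp_all [addRec, appendToRow]
    · obtain ⟨hins, hrow⟩ := insertT_newRow_cons_of_insRow_eq_some h rs
      obtain ⟨ih₁, ih₂⟩ := ih hQ.2 b
      simp_all [addRec, appendToRow]

end Recording

lemma RS_append_singleton (xs : List ℕ) (x : ℕ) :
    RS (xs ++ [x]) = (insertT (RS xs).1 x,
      addRec (RS xs).2 ((insertT (RS xs).1 x).map List.length) (xs.length + 1)) := by
  rw [RS, RS, List.length_append, List.length_singleton, List.range_succ, List.map_append,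
    List.zip_append (by simp), List.foldl_append]
  rfl

lemma pairwise_of_mem_RS_fst (xs : List ℕ) : ∀ r ∈ (RS xs).1, r.Pairwise (· ≤ ·) := by
  induction xs using List.reverseRecOn with
  | nil => simp [RS]
  | append_singleton xs x ih =>
    rw [RS_append_singleton]
    exact pairwise_of_mem_insertT ih x

lemma map_length_RS_snd (xs : List ℕ) :
    (RS xs).2.map List.length = (RS xs).1.map List.length := by
  induction xs using List.reverseRecOn with
  | nil => rfl
  | append_singleton xs x ih =>
    obtain ⟨hrec, hshape⟩ := addRec_insertT ih x (xs.length + 1)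
    rw [RS_append_singleton, hrec]
    exact hshape

lemma RS_snd_append_singleton (xs : List ℕ) (x : ℕ) :
    (RS (xs ++ [x])).2 = appendToRow (RS xs).2 (newRow (RS xs).1 x) (xs.length + 1) := by
  rw [RS_append_singleton, (addRec_insertT (map_length_RS_snd xs) x _).1]

lemma getD_RS_snd_isPrefix (xs ys : List ℕ) (i : ℕ) :
    (RS xs).2.getD i [] <+: (RS (xs ++ ys)).2.getD i [] := by
  induction ys using List.reverseRecOn with
  | nil => simp
  | append_singleton ys y ih =>
    rw [← List.append_assoc, RS_snd_append_singleton]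
    exact ih.trans (getD_isPrefix_getD_appendToRow _ _ _ _)

theorem mem_getD_RS_snd {xs : List ℕ} {m : ℕ} (hm : m < xs.length) :
    m + 1 ∈ (RS xs).2.getD (newRow (RS (xs.take m)).1 xs[m]) [] := by
  have hlen : (xs.take m).length = m := List.length_take_of_le hm.le
  have hmem : m + 1 ∈ (RS (xs.take (m + 1))).2.getD (newRow (RS (xs.take m)).1 xs[m]) [] := by
    rw [List.take_succ_eq_append_getElem hm, RS_snd_append_singleton, hlen]
    refine mem_getD_appendToRow ?_ _
    calc newRow (RS (xs.take m)).1 xs[m] ≤ (RS (xs.take m)).1.length := newRow_le_length _ _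
      _ = (RS (xs.take m)).2.length := by simpa using congrArg List.length (map_length_RS_snd _).symm
  have hprefix := getD_RS_snd_isPrefix (xs.take (m + 1)) (xs.drop (m + 1))
    (newRow (RS (xs.take m)).1 xs[m])
  rw [List.take_append_drop] at hprefix
  exact hprefix.mem hmem

section ColumnTableau

variable {l : List ℕ}

lemma colStart_succ (l : List ℕ) (j : ℕ) : colStart l (j + 1) = colStart l j + conjC l j := by
  simp [colStart, List.range_succ]

lemma colStart_monotone (l : List ℕ) : Monotone (colStart l) :=
  monotone_nat_of_le_succ fun j => by rw [colStart_succ]; omega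

lemma colStart_eq_of_mem_Ico {j j' m : ℕ} (h : m ∈ Set.Ico (colStart l j) (colStart l (j + 1)))
    (h' : m ∈ Set.Ico (colStart l j') (colStart l (j' + 1))) : colStart l j = colStart l j' := by
  have hmono := colStart_monotone l
  rcases lt_trichotomy j j' with hjj' | rfl | hjj'
  · have := hmono (Nat.succ_le_of_lt hjj'); grind
  · rfl
  · have := hmono (Nat.succ_le_of_lt hjj'); grind

lemma lt_conjC (hsort : l.Pairwise (· ≥ ·)) {i j : ℕ} (hi : i < l.length) (hj : j < l[i]) :
    i < conjC l j := by
  induction l generalizing i with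
  | nil => simp at hi
  | cons a l ih =>
    rw [List.pairwise_cons] at hsort
    have hja : j < a := by
      cases i with
      | zero => simpa using hj
      | succ i => exact hj.trans_le (hsort.1 _ (List.getElem_mem _))
    cases i with
    | zero => simp [conjC, hja]
    | succ i => simpa [conjC, hja] using ih hsort.2 (by simpa using hi) hj

theorem row_eq_of_mem_tabColList (hsort : l.Pairwise (· ≥ ·)) {i j m : ℕ}
    (hm : m ∈ Set.Ico (colStart l j) (colStart l (j + 1)))
    (hmem : m + 1 ∈ (tabColList l).getD i []) : i = m - colStart l j := by
  have hi : i < l.length := by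
    by_contra! hi
    rw [List.getD_eq_default _ _ (by simpa [tabColList] using hi)] at hmem
    simp at hmem
  rw [tabColList, List.getD_eq_getElem _ _ (by simpa using hi)] at hmem
  simp only [List.getElem_map, List.getElem_range, List.mem_map, List.mem_range] at hmem
  obtain ⟨j', hj', hval⟩ := hmem
  rw [List.getD_eq_getElem _ _ hi] at hj'
  have hij' := lt_conjC hsort hi hj'
  have hm' : m ∈ Set.Ico (colStart l j') (colStart l (j' + 1)) := by
    rw [colStart_succ]; constructor <;> omega
  rw [colStart_eq_of_mem_Ico hm hm']
  omega

end ColumnTableau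

section Words

variable {xs l : List ℕ} {j : ℕ}

theorem getElem_succ_lt_of_RS_snd_eq_tabColList (hsort : l.Pairwise (· ≥ ·))
    (hQ : (RS xs).2 = tabColList l) {p : ℕ} (hp : colStart l j ≤ p)
    (hp' : p + 1 < colStart l (j + 1)) (hpxs : p + 1 < xs.length) :
    xs[p + 1] < xs[p] := by
  set P := (RS (xs.take p)).1
  have hrow : newRow P xs[p] = p - colStart l j :=
    row_eq_of_mem_tabColList hsort ⟨hp, by omega⟩ (hQ ▸ mem_getD_RS_snd (by omega))
  have hrow' : newRow (insertT P xs[p]) xs[p + 1] = p + 1 - colStart l j := by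
    have hmem := hQ ▸ mem_getD_RS_snd hpxs
    rw [List.take_succ_eq_append_getElem (by omega), RS_append_singleton] at hmem
    exact row_eq_of_mem_tabColList hsort ⟨by omega, hp'⟩ hmem
  by_contra! hle
  have hbump := newRow_insertT_le (pairwise_of_mem_RS_fst (xs.take p)) hle
  rw [hrow, hrow'] at hbump
  omega

theorem getElem_lt_of_RS_snd_eq_tabColList (hsort : l.Pairwise (· ≥ ·))
    (hQ : (RS xs).2 = tabColList l) {a b : ℕ} (ha : colStart l j ≤ a) (hab : a < b)
    (hb : b < colStart l (j + 1)) (hbxs : b < xs.length) :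
    xs[b] < xs[a] := by
  induction b, hab using Nat.le_induction with
  | base => exact getElem_succ_lt_of_RS_snd_eq_tabColList hsort hQ ha hb hbxs
  | succ b hab ih =>
    exact (getElem_succ_lt_of_RS_snd_eq_tabColList hsort hQ (by omega) hb hbxs).trans
      (ih (by omega) (by omega))

lemma length_wordOf {n : ℕ} (w : Equiv.Perm (Fin n)) : (wordOf w).length = n := by
  simp [wordOf]

lemma getElem_wordOf {n : ℕ} (w : Equiv.Perm (Fin n)) (p : ℕ) (hp : p < (wordOf w).length) :
    (wordOf w)[p] = (w ⟨p, length_wordOf w ▸ hp⟩ : ℕ) + 1 := by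
  simp [wordOf]

end Words

end RobinsonSchensted

open RobinsonSchensted in
theorem decreasing_blocks_of_recording_eq_tabCol_general (n : ℕ) (l : List ℕ)
    (hsort : l.Chain' (· ≥ ·))
    (w : Equiv.Perm (Fin n))
    (hQ : (RS (wordOf w)).2 = tabColList l) :
    ∀ (j : ℕ) (a b : Fin n), colStart l j ≤ (a : ℕ) → (a : ℕ) < (b : ℕ) →
      (b : ℕ) < colStart l (j + 1) → w b < w a := by
  intro j a b ha hab hb
  have hlt := getElem_lt_of_RS_snd_eq_tabColList (List.isChain_iff_pairwise.mp hsort) hQ ha hab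
    hb (by simp [length_wordOf])
  rw [getElem_wordOf, getElem_wordOf] at hlt
  exact Fin.lt_def.mpr (by simpa using hlt)

/-- If the Robinson–Schensted recording tableau of `w ∈ S_n` is the column
superstandard tableau `tab_λ`, then `w` is strictly decreasing on each
consecutive block of positions of sizes `λ'_1, λ'_2, …`. -/
theorem decreasing_blocks_of_recording_eq_tabCol (n : ℕ) (l : List ℕ)
    (hsort : l.Chain' (· ≥ ·)) (hpos : ∀ x ∈ l, 0 < x) (hsum : l.sum = n)
    (w : Equiv.Perm (Fin n))
    (hQ : (RS (wordOf w)).2 = tabColList l) :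
    ∀ (j : ℕ) (a b : Fin n), colStart l j ≤ (a : ℕ) → (a : ℕ) < (b : ℕ) →
      (b : ℕ) < colStart l (j + 1) → w b < w a :=
  decreasing_blocks_of_recording_eq_tabCol_general n l hsort w hQ
end

section
/- Let (W,S) be a Coxeter system with Hecke algebra H over A = ℤ[q,q⁻¹], basis {T_w}, with T_s² = 1 + (q−q⁻¹)T_s. Let J ⊆ S and let φ: H_J → A be the A-algebra homomorphism with φ(T_s) = −q⁻¹ for s ∈ J. Then the induced module H ⊗_{H_J} A_φ is A-free with basis (T_w ⊗ 1 | w ∈ D_J), and for s ∈ S and w ∈ D_J: T_s(T_w ⊗ 1) = T_{sw} ⊗ 1 if sw > w and sw ∈ D_J; T_s(T_w ⊗ 1) = −q⁻¹(T_w ⊗ 1) if sw > w and sw ∉ D_J; T_s(T_w ⊗ 1) = T_{sw} ⊗ 1 + (q−q⁻¹)(T_w ⊗ 1) if sw < w. -/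
/-!
The exchange condition for `(W, S)` is extracted from the Hecke algebra itself: if
`ℓ(sw) = ℓ(wt) = ℓ(w) + 1` and `ℓ(swt) = ℓ(w)`, expanding `T_s T_w T_t` in two ways gives
`(q - q⁻¹) T_{sw} = (q - q⁻¹) T_{wt}`, hence `sw = wt`. By the exchange condition every left coset
`w W_J` meets `D_J` exactly in its element `d` of minimal length. Writing `a = -q⁻¹`, the relation
`a² = 1 + (q - q⁻¹) a` makes the linear map `T_w ↦ a ^ (ℓ(w) - ℓ(d)) e_d` vanish on the left ideal
generated by the `T_s - a` (`s ∈ J`), so the classes of the `T_d` (`d ∈ D_J`) are independent;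
they span because `T_w ≡ a ^ (ℓ(w) - ℓ(d)) T_d`. The action formulas are the multiplication rules,
with Deodhar's lemma `sw = ws'` in the middle case.
-/

noncomputable section

abbrev A : Type := LaurentPolynomial ℤ

noncomputable def qA : A := LaurentPolynomial.T 1
noncomputable def qAinv : A := LaurentPolynomial.T (-1)

theorem qA_mul_qAinv : qA * qAinv = 1 := by
  rw [qA, qAinv, ← LaurentPolynomial.T_add, add_neg_cancel, LaurentPolynomial.T_zero]

theorem qA_sub_qAinv_ne_zero : qA - qAinv ≠ 0 := by
  intro h
  simpa [qA, qAinv] using congrArg (fun f : A => f.coeff 1) h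

theorem neg_qAinv_mul_self : -qAinv * -qAinv = 1 + (qA - qAinv) * -qAinv := by
  linear_combination qA_mul_qAinv

theorem Module.Basis.eq_of_smul_eq_smul {ι R M : Type*} [CommSemiring R] [AddCommMonoid M]
    [Module R M] (b : Module.Basis ι R M) {c : R} (hc : c ≠ 0) {x y : ι} (h : c • b x = c • b y) :
    x = y := by
  have := congrArg b.repr h
  simp only [map_smul, Module.Basis.repr_self, Finsupp.smul_single, smul_eq_mul, mul_one] at this
  exact (Finsupp.single_left_inj hc).mp this

namespace CoxeterSystem

variable {B W : Type*} [Group W] {M : CoxeterMatrix B} (cs : CoxeterSystem M W)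

local prefix:100 "s" => cs.simple
local prefix:100 "π" => cs.wordProd
local prefix:100 "ℓ" => cs.length

section Parabolic

variable (J : Set B)

def parabolicSubgroup : Subgroup W := Subgroup.closure (cs.simple '' J)

variable {cs J}

theorem simple_mem_parabolicSubgroup {j : B} (hj : j ∈ J) : s j ∈ cs.parabolicSubgroup J :=
  Subgroup.subset_closure ⟨j, hj, rfl⟩

theorem wordProd_mem_parabolicSubgroup {ω : List B} (hω : ∀ i ∈ ω, i ∈ J) :
    π ω ∈ cs.parabolicSubgroup J :=
  (cs.parabolicSubgroup J).list_prod_mem <| by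
    simpa using fun i hi => simple_mem_parabolicSubgroup (hω i hi)

theorem exists_wordProd_eq_of_mem_parabolicSubgroup {u : W} (hu : u ∈ cs.parabolicSubgroup J) :
    ∃ ω : List B, (∀ i ∈ ω, i ∈ J) ∧ π ω = u := by
  induction hu using Subgroup.closure_induction with
  | mem x hx =>
    obtain ⟨j, hj, rfl⟩ := hx
    exact ⟨[j], by simpa using hj, cs.wordProd_singleton j⟩
  | one => exact ⟨[], by simp, cs.wordProd_nil⟩
  | mul x y _ _ hx hy =>
    obtain ⟨ω₁, hω₁, rfl⟩ := hx
    obtain ⟨ω₂, hω₂, rfl⟩ := hy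
    exact ⟨ω₁ ++ ω₂, by simpa using fun i hi => hi.elim (hω₁ i) (hω₂ i), cs.wordProd_append _ _⟩
  | inv x _ hx =>
    obtain ⟨ω, hω, rfl⟩ := hx
    exact ⟨ω.reverse, by simpa using hω, by rw [cs.wordProd_reverse]⟩

variable (cs J)

def minCosetRep (x : W ⧸ cs.parabolicSubgroup J) : W :=
  Function.argminOn cs.length {w : W | (w : W ⧸ cs.parabolicSubgroup J) = x}
    (QuotientGroup.mk_surjective x)

variable {cs J}

theorem mk_minCosetRep (x : W ⧸ cs.parabolicSubgroup J) :
    (cs.minCosetRep J x : W ⧸ cs.parabolicSubgroup J) = x :=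
  Function.argminOn_mem cs.length {w : W | (w : W ⧸ cs.parabolicSubgroup J) = x} _

theorem length_minCosetRep_le {x : W ⧸ cs.parabolicSubgroup J} {w : W}
    (hw : (w : W ⧸ cs.parabolicSubgroup J) = x) : ℓ (cs.minCosetRep J x) ≤ ℓ w :=
  Function.argminOn_le cs.length {w : W | (w : W ⧸ cs.parabolicSubgroup J) = x} hw

theorem length_minCosetRep_le_length_mul (x : W ⧸ cs.parabolicSubgroup J) {u : W}
    (hu : u ∈ cs.parabolicSubgroup J) : ℓ (cs.minCosetRep J x) ≤ ℓ (cs.minCosetRep J x * u) :=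
  length_minCosetRep_le <| (QuotientGroup.mk_mul_of_mem _ hu).trans (mk_minCosetRep x)

theorem minCosetRep_mem_DJ (x : W ⧸ cs.parabolicSubgroup J) : cs.minCosetRep J x ∈ cs.DJ J :=
  fun j hj => lt_of_le_of_ne (length_minCosetRep_le_length_mul x (simple_mem_parabolicSubgroup hj))
    (cs.length_mul_simple_ne _ j).symm

end Parabolic

variable {R H : Type*} [CommRing R] [Ring H] [Algebra R H]

/-- For `c = q - q⁻¹` these are the multiplication rules of the Hecke algebra of `(W, S)`. -/
structure IsHeckeBasis (T : Module.Basis W R H) (c : R) : Prop where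
  one : T 1 = 1
  simple_mul_of_length_lt : ∀ i w, ℓ w < ℓ (s i * w) → T (s i) * T w = T (s i * w)
  simple_mul_of_length_gt : ∀ i w, ℓ (s i * w) < ℓ w → T (s i) * T w = T (s i * w) + c • T w

namespace IsHeckeBasis

variable {cs} {T : Module.Basis W R H} {c : R} {J : Set B} (hT : cs.IsHeckeBasis T c)
include hT

theorem prod_map_simple {ω : List B} (hω : cs.IsReduced ω) :
    (ω.map fun i => T (s i)).prod = T (π ω) := by
  induction ω with
  | nil => simpa using hT.one.symm
  | cons i ω ih =>
    have hω' : cs.IsReduced ω := by simpa using hω.drop 1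
    have hlt : ℓ (π ω) < ℓ (s i * π ω) := by
      rw [← cs.wordProd_cons, hω, hω']
      simp
    rw [List.map_cons, List.prod_cons, ih hω', hT.simple_mul_of_length_lt i _ hlt, cs.wordProd_cons]

theorem mul_simple_of_length_lt {w : W} {i : B} (h : ℓ w < ℓ (w * s i)) :
    T w * T (s i) = T (w * s i) := by
  obtain ⟨ω, hω, rfl⟩ := cs.exists_isReduced w
  have hωi : cs.IsReduced (ω ++ [i]) := by
    rcases cs.length_mul_simple (π ω) i with h' | h' <;>
      simp_all [IsReduced, cs.wordProd_append]
    omega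
  simpa [cs.wordProd_append, ← hT.prod_map_simple hω] using hT.prod_map_simple hωi

theorem simple_mul_self (i : B) : T (s i) * T (s i) = 1 + c • T (s i) := by
  rw [hT.simple_mul_of_length_gt i (s i) (by simp), cs.simple_mul_simple_self, hT.one]

theorem mul_simple_of_length_gt {w : W} {i : B} (h : ℓ (w * s i) < ℓ w) :
    T w * T (s i) = T (w * s i) + c • T w := by
  have hup : T (w * s i) * T (s i) = T w := by
    rw [hT.mul_simple_of_length_lt (by simpa using h), cs.simple_mul_simple_cancel_right]
  calc T w * T (s i) = T (w * s i) * (T (s i) * T (s i)) := by rw [← mul_assoc, hup]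
    _ = T (w * s i) + c • T w := by rw [hT.simple_mul_self, mul_add, mul_one, mul_smul_comm, hup]

theorem simple_mul_eq_mul_simple (hc : c ≠ 0) {i j : B} {w : W} (hi : ℓ w < ℓ (s i * w))
    (hj : ℓ w < ℓ (w * s j)) (hij : ℓ (s i * w * s j) = ℓ w) : s i * w = w * s j := by
  have hleft : T (s i) * T w * T (s j) = T (s i * w * s j) + c • T (s i * w) := by
    rw [hT.simple_mul_of_length_lt i w hi]
    exact hT.mul_simple_of_length_gt (by omega)
  have hright : T (s i) * T w * T (s j) = T (s i * w * s j) + c • T (w * s j) := by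
    rw [mul_assoc, hT.mul_simple_of_length_lt hj,
      hT.simple_mul_of_length_gt i _ (by rw [← mul_assoc]; omega), mul_assoc]
  exact T.eq_of_smul_eq_smul hc (add_left_cancel (hleft.symm.trans hright))

theorem exists_mul_simple_eq_eraseIdx (hc : c ≠ 0) {ω : List B} (hω : cs.IsReduced ω) {j : B}
    (h : ℓ (π ω * s j) < ℓ (π ω)) : ∃ k < ω.length, π ω * s j = π (ω.eraseIdx k) := by
  induction ω with
  | nil => simp at h
  | cons i ω ih =>
    have hω' : cs.IsReduced ω := by simpa using hω.drop 1
    have hi : ℓ (π ω) < ℓ (s i * π ω) := by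
      rw [← cs.wordProd_cons, hω, hω']
      simp
    rw [cs.wordProd_cons] at h ⊢
    by_cases hj : ℓ (π ω * s j) < ℓ (π ω)
    · obtain ⟨k, hk, hk'⟩ := ih hω' hj
      refine ⟨k + 1, by simpa using hk, ?_⟩
      rw [List.eraseIdx_cons_succ, cs.wordProd_cons, mul_assoc, hk']
    · have hj' : ℓ (π ω) < ℓ (π ω * s j) := by
        rcases cs.length_mul_simple (π ω) j with h' | h' <;> omega
      have hij : ℓ (s i * π ω * s j) = ℓ (π ω) := by
        rcases cs.length_mul_simple (s i * π ω) j with h' | h' <;>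
          rcases cs.length_simple_mul (π ω) i with h'' | h'' <;> omega
      refine ⟨0, by simp, ?_⟩
      rw [hT.simple_mul_eq_mul_simple hc hi hj' hij, List.eraseIdx_cons_zero,
        cs.simple_mul_simple_cancel_right]

theorem exists_simple_mul_eq_mul_simple_of_not_mem_DJ (hc : c ≠ 0) {i : B} {w : W}
    (hw : w ∈ cs.DJ J) (hi : ℓ w < ℓ (s i * w)) (hiw : s i * w ∉ cs.DJ J) :
    ∃ j ∈ J, s i * w = w * s j := by
  simp only [DJ, Set.mem_ofPred_eq, not_forall, not_lt] at hiw
  obtain ⟨j, hj, hle⟩ := hiw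
  have hij : ℓ (s i * w * s j) = ℓ w := by
    rcases cs.length_mul_simple (s i * w) j with h' | h' <;>
      rcases cs.length_simple_mul w i with h'' | h'' <;> omega
  exact ⟨j, hj, hT.simple_mul_eq_mul_simple hc hi (hw j hj) hij⟩

theorem exists_word_length_mul_eq_add (hc : c ≠ 0) {d : W}
    (hd : ∀ u ∈ cs.parabolicSubgroup J, ℓ d ≤ ℓ (d * u)) {ω : List B} (hω : ∀ i ∈ ω, i ∈ J) :
    ∃ ω' : List B, (∀ i ∈ ω', i ∈ J) ∧ π ω' = π ω ∧ ℓ (d * π ω') = ℓ d + ω'.length := by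
  induction ω using List.reverseRecOn with
  | nil => exact ⟨[], by simp, rfl, by simp⟩
  | append_singleton ω j ih =>
    obtain ⟨ω', hω'J, hω', hlen⟩ := ih fun i hi => hω i (by simp [hi])
    have hj : j ∈ J := hω j (by simp)
    rcases cs.length_mul_simple (d * π ω') j with hup | hdown
    · refine ⟨ω' ++ [j], by simpa using fun i hi => hi.elim (hω'J i) (· ▸ hj), ?_, ?_⟩
      · simp [cs.wordProd_append, hω']
      · rw [cs.wordProd_append, cs.wordProd_singleton, ← mul_assoc, hup, hlen]
        simp [add_assoc]
    obtain ⟨δ, hδ, rfl⟩ := cs.exists_isReduced d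
    have hred : cs.IsReduced (δ ++ ω') := by
      rw [IsReduced, cs.wordProd_append, hlen, hδ.eq, List.length_append]
    obtain ⟨k, hk, hexch⟩ := hT.exists_mul_simple_eq_eraseIdx hc hred (j := j)
      (by rw [cs.wordProd_append]; omega)
    rw [cs.wordProd_append] at hexch
    rcases lt_or_ge k δ.length with hkδ | hkδ
    · -- a shorter element `π (δ.eraseIdx k)` of the coset of `π δ`
      exfalso
      rw [List.eraseIdx_append_of_lt_length hkδ, cs.wordProd_append] at hexch
      have hω'P := wordProd_mem_parabolicSubgroup (cs := cs) hω'J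
      have hmem : π ω' * s j * (π ω')⁻¹ ∈ cs.parabolicSubgroup J :=
        mul_mem (mul_mem hω'P (simple_mem_parabolicSubgroup hj)) (inv_mem hω'P)
      have hmin := hd _ hmem
      rw [← mul_assoc, ← mul_assoc, hexch, mul_inv_cancel_right] at hmin
      have hshort := cs.length_wordProd_le (δ.eraseIdx k)
      rw [List.length_eraseIdx_of_lt hkδ, ← hδ.eq] at hshort
      have := hδ.eq
      omega
    · rw [List.eraseIdx_append_of_length_le hkδ, cs.wordProd_append, mul_assoc] at hexch
      have hk' : k - δ.length < ω'.length := by simp at hk; omega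
      refine ⟨ω'.eraseIdx (k - δ.length), fun i hi => hω'J i (List.mem_of_mem_eraseIdx hi), ?_, ?_⟩
      · rw [← mul_left_cancel hexch, hω', cs.wordProd_append, cs.wordProd_singleton]
      · rw [← hexch, ← mul_assoc, List.length_eraseIdx_of_lt hk']
        omega

/-- Otherwise the last letter of a `J`-word for `(minCosetRep d)⁻¹ * d` would be a right descent
of `d`. -/
theorem minCosetRep_mk_of_mem_DJ (hc : c ≠ 0) {d : W} (hd : d ∈ cs.DJ J) :
    cs.minCosetRep J d = d := by
  set m := cs.minCosetRep J d with hm_def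
  have hm : (m : W ⧸ cs.parabolicSubgroup J) = d := mk_minCosetRep _
  obtain ⟨ω, hωJ, hω⟩ := exists_wordProd_eq_of_mem_parabolicSubgroup (QuotientGroup.eq.mp hm)
  obtain ⟨ω', hω'J, hω', hlen⟩ :=
    hT.exists_word_length_mul_eq_add hc (fun _ => length_minCosetRep_le_length_mul _) hωJ
  rw [← hm_def, hω', hω, mul_inv_cancel_left] at hlen
  rcases List.eq_nil_or_concat' ω' with rfl | ⟨ω'', j, rfl⟩
  · rw [← hω', cs.wordProd_nil] at hω
    exact inv_mul_eq_one.mp hω.symm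
  · have hdj : d * s j = m * π ω'' := by
      rw [← mul_inv_cancel_left m d, ← hω, ← hω', cs.wordProd_append, cs.wordProd_singleton,
        mul_assoc, cs.simple_mul_simple_cancel_right]
    have hlt := hd j (hω'J j (by simp))
    rw [hdj] at hlt
    have := cs.length_mul_le m (π ω'')
    have := cs.length_wordProd_le ω''
    simp only [List.length_append, List.length_singleton] at hlen
    omega

end IsHeckeBasis

section InducedModule

variable (T : Module.Basis W R H) (J : Set B) (a : R)

/-- The kernel of `H → H ⊗_{H_J} R_a`, where each `T_s` (`s ∈ J`) acts on `R_a` by `a`. -/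
def inductionIdeal : Submodule H H := Submodule.span H {x | ∃ j ∈ J, x = T (s j) - a • 1}

def cosetRep (w : W) : cs.DJ J := ⟨cs.minCosetRep J w, minCosetRep_mem_DJ _⟩

variable {J} in
theorem cosetRep_mul_simple (w : W) {j : B} (hj : j ∈ J) :
    cs.cosetRep J (w * s j) = cs.cosetRep J w := by
  simp only [cosetRep, QuotientGroup.mk_mul_of_mem _ (simple_mem_parabolicSubgroup hj)]

theorem length_cosetRep_le (w : W) : ℓ (cs.cosetRep J w : W) ≤ ℓ w :=
  length_minCosetRep_le rfl

/-- The coordinates of `T_w ⊗ 1` in the basis `(T_d ⊗ 1 | d ∈ D_J)`. -/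
def cosetCoord : H →ₗ[R] (cs.DJ J →₀ R) :=
  T.constr ℕ fun w => Finsupp.single (cs.cosetRep J w) (a ^ (ℓ w - ℓ (cs.cosetRep J w : W)))

variable {cs T J a}

theorem mul_simple_sub_smul_mem_inductionIdeal (h : H) {j : B} (hj : j ∈ J) :
    h * T (s j) - a • h ∈ cs.inductionIdeal T J a := by
  have hgen : T (s j) - a • 1 ∈ cs.inductionIdeal T J a := Submodule.subset_span ⟨j, hj, rfl⟩
  simpa [mul_sub] using Submodule.smul_mem _ h hgen

theorem cosetCoord_basis (w : W) :
    cs.cosetCoord T J a (T w) =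
      Finsupp.single (cs.cosetRep J w) (a ^ (ℓ w - ℓ (cs.cosetRep J w : W))) :=
  T.constr_basis ℕ _ w

namespace IsHeckeBasis

variable {c : R} (hT : cs.IsHeckeBasis T c)
include hT

theorem cosetCoord_basis_mul_simple (ha : a * a = 1 + c * a) (w : W) {j : B} (hj : j ∈ J) :
    cs.cosetCoord T J a (T w * T (s j)) = a • cs.cosetCoord T J a (T w) := by
  have hd := cs.cosetRep_mul_simple w hj
  have hle := cs.length_cosetRep_le J w
  have hle' := cs.length_cosetRep_le J (w * s j)
  rw [hd] at hle'
  obtain ⟨k, hk⟩ : ∃ k, ℓ (w * s j) - ℓ (cs.cosetRep J w : W) = k := ⟨_, rfl⟩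
  rcases cs.length_mul_simple w j with hup | hdown
  · have hk' : ℓ w - ℓ (cs.cosetRep J w : W) + 1 = k := by omega
    rw [hT.mul_simple_of_length_lt (by omega : ℓ w < ℓ (w * s j)), cosetCoord_basis,
      cosetCoord_basis, hd, hk, ← hk', Finsupp.smul_single, smul_eq_mul, pow_succ']
  · have hk' : ℓ w - ℓ (cs.cosetRep J w : W) = k + 1 := by omega
    rw [hT.mul_simple_of_length_gt (by omega : ℓ (w * s j) < ℓ w), map_add, map_smul,
      cosetCoord_basis, cosetCoord_basis, hd, hk, hk', Finsupp.smul_single, Finsupp.smul_single,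
      ← Finsupp.single_add, smul_eq_mul, smul_eq_mul]
    congr 1
    linear_combination -a ^ k * ha

theorem cosetCoord_mul_simple_sub_smul (ha : a * a = 1 + c * a) (h : H) {j : B} (hj : j ∈ J) :
    cs.cosetCoord T J a (h * T (s j) - a • h) = 0 := by
  have hzero :
      (cs.cosetCoord T J a).comp (LinearMap.mulRight R (T (s j)) - a • LinearMap.id) = 0 :=
    T.ext fun w => by simp [hT.cosetCoord_basis_mul_simple ha w hj]
  simpa using LinearMap.congr_fun hzero h

theorem inductionIdeal_le_ker_cosetCoord (ha : a * a = 1 + c * a) :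
    (cs.inductionIdeal T J a).restrictScalars R ≤ LinearMap.ker (cs.cosetCoord T J a) := by
  intro x hx
  suffices ∀ h : H, cs.cosetCoord T J a (h * x) = 0 by simpa using this 1
  induction hx using Submodule.span_induction with
  | mem x hx =>
    obtain ⟨j, hj, rfl⟩ := hx
    intro h
    simpa [mul_sub] using hT.cosetCoord_mul_simple_sub_smul ha h hj
  | zero => simp
  | add x y _ _ hx hy => simp [mul_add, hx, hy]
  | smul r x _ hx => simpa [← mul_assoc] using fun h => hx (h * r)

theorem cosetRep_of_mem_DJ (hc : c ≠ 0) {d : W} (hd : d ∈ cs.DJ J) :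
    cs.cosetRep J d = ⟨d, hd⟩ :=
  Subtype.ext (hT.minCosetRep_mk_of_mem_DJ hc hd)

theorem basis_sub_smul_basis_cosetRep_mem (hc : c ≠ 0) (w : W) :
    T w - a ^ (ℓ w - ℓ (cs.cosetRep J w : W)) • T (cs.cosetRep J w) ∈
      cs.inductionIdeal T J a := by
  by_cases hw : w ∈ cs.DJ J
  · rw [hT.cosetRep_of_mem_DJ hc hw, Nat.sub_self, pow_zero, one_smul, sub_self]
    exact zero_mem _
  obtain ⟨j, hj, hlt⟩ : ∃ j ∈ J, ℓ (w * s j) < ℓ w := by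
    simp only [DJ, Set.mem_ofPred_eq, not_forall, not_lt] at hw
    obtain ⟨j, hj, hle⟩ := hw
    exact ⟨j, hj, lt_of_le_of_ne hle (cs.length_mul_simple_ne w j)⟩
  have hw' : T w = T (w * s j) * T (s j) := by
    rw [hT.mul_simple_of_length_lt (by simpa using hlt), cs.simple_mul_simple_cancel_right]
  have hd := cs.cosetRep_mul_simple w hj
  have hle := cs.length_cosetRep_le J (w * s j)
  rw [hd] at hle
  have hexp : ℓ w - ℓ (cs.cosetRep J w : W) = ℓ (w * s j) - ℓ (cs.cosetRep J w : W) + 1 := by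
    rcases cs.length_mul_simple w j with h' | h' <;> omega
  have key : T w - a ^ (ℓ w - ℓ (cs.cosetRep J w : W)) • T (cs.cosetRep J w) =
      (T (w * s j) * T (s j) - a • T (w * s j)) + a • (T (w * s j) -
        a ^ (ℓ (w * s j) - ℓ (cs.cosetRep J (w * s j) : W)) • T (cs.cosetRep J (w * s j))) := by
    rw [hd, ← hw', hexp, pow_succ', mul_smul]
    module
  rw [key]
  exact add_mem (mul_simple_sub_smul_mem_inductionIdeal _ hj)
    (Submodule.smul_of_tower_mem _ a (basis_sub_smul_basis_cosetRep_mem hc (w * s j)))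
termination_by cs.length w

theorem mk_basis_eq_smul_mk_basis_cosetRep (hc : c ≠ 0) (w : W) :
    (Submodule.Quotient.mk (T w) : H ⧸ (cs.inductionIdeal T J a).restrictScalars R) =
      a ^ (ℓ w - ℓ (cs.cosetRep J w : W)) • Submodule.Quotient.mk (T (cs.cosetRep J w)) := by
  rw [← Submodule.Quotient.mk_smul, Submodule.Quotient.eq]
  exact hT.basis_sub_smul_basis_cosetRep_mem hc w

theorem linearIndependent_mk_basis (hc : c ≠ 0) (ha : a * a = 1 + c * a) :
    LinearIndependent R fun d : cs.DJ J =>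
      (Submodule.Quotient.mk (T d) : H ⧸ (cs.inductionIdeal T J a).restrictScalars R) := by
  refine .of_comp (Submodule.liftQ _ _ (hT.inductionIdeal_le_ker_cosetCoord ha)) ?_
  simpa [Function.comp_def, cosetCoord_basis, hT.cosetRep_of_mem_DJ hc]
    using Finsupp.linearIndependent_single_one R (cs.DJ J)

theorem span_mk_basis (hc : c ≠ 0) :
    ⊤ ≤ Submodule.span R (Set.range fun d : cs.DJ J =>
      (Submodule.Quotient.mk (T d) : H ⧸ (cs.inductionIdeal T J a).restrictScalars R)) := by
  rw [← Submodule.range_mkQ, LinearMap.range_eq_map, ← T.span_eq, Submodule.map_span,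
    Submodule.span_le]
  rintro _ ⟨_, ⟨w, rfl⟩, rfl⟩
  rw [Submodule.mkQ_apply, hT.mk_basis_eq_smul_mk_basis_cosetRep hc]
  exact Submodule.smul_mem _ _ (Submodule.subset_span ⟨_, rfl⟩)

def inducedBasis (hc : c ≠ 0) (ha : a * a = 1 + c * a) :
    Module.Basis (cs.DJ J) R (H ⧸ (cs.inductionIdeal T J a).restrictScalars R) :=
  .mk (hT.linearIndependent_mk_basis hc ha) (hT.span_mk_basis hc)

theorem inducedBasis_apply (hc : c ≠ 0) (ha : a * a = 1 + c * a) (d : cs.DJ J) :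
    hT.inducedBasis hc ha d = Submodule.Quotient.mk (T d) :=
  Module.Basis.mk_apply _ _ _

theorem mk_simple_mul_of_not_mem_DJ (hc : c ≠ 0) {i : B} {w : W} (hw : w ∈ cs.DJ J)
    (hi : ℓ w < ℓ (s i * w)) (hiw : s i * w ∉ cs.DJ J) :
    (Submodule.Quotient.mk (T (s i) * T w) : H ⧸ (cs.inductionIdeal T J a).restrictScalars R) =
      a • Submodule.Quotient.mk (T w) := by
  obtain ⟨j, hj, hij⟩ := hT.exists_simple_mul_eq_mul_simple_of_not_mem_DJ hc hw hi hiw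
  rw [hT.simple_mul_of_length_lt i w hi, hij, ← hT.mul_simple_of_length_lt (hw j hj),
    ← sub_eq_zero, ← Submodule.Quotient.mk_smul, ← Submodule.Quotient.mk_sub,
    Submodule.Quotient.mk_eq_zero]
  exact mul_simple_sub_smul_mem_inductionIdeal _ hj

end IsHeckeBasis

end InducedModule

end CoxeterSystem

/-- The induced module `H ⊗_{H_J} A_φ` is realised as the quotient of `H` by the left ideal
generated by the `T_s + q⁻¹` (`s ∈ J`); `T_w ⊗ 1` is the class of `T_w`. -/
theorem induced_module_basis_and_action {B W : Type*} [Group W] {M : CoxeterMatrix B}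
    (cs : CoxeterSystem M W) (J : Set B)
    (H : Type*) [Ring H] [Algebra A H]
    (TT : Module.Basis W A H)
    (hT1 : TT 1 = 1)
    (hmul_up : ∀ (i : B) (w : W), cs.length w < cs.length (cs.simple i * w) →
      TT (cs.simple i) * TT w = TT (cs.simple i * w))
    (hmul_down : ∀ (i : B) (w : W), cs.length (cs.simple i * w) < cs.length w →
      TT (cs.simple i) * TT w = TT (cs.simple i * w) + (qA - qAinv) • TT w)
    (N : Submodule A H)
    (hN : N = (Submodule.span H
      {x : H | ∃ j ∈ J, x = TT (cs.simple j) + qAinv • (1 : H)}).restrictScalars A) :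
    (∃ bas : Module.Basis {d : W // d ∈ cs.DJ J} A (H ⧸ N),
        ∀ d : {d : W // d ∈ cs.DJ J}, bas d = Submodule.Quotient.mk (TT d.1)) ∧
    (∀ (i : B), ∀ w ∈ cs.DJ J,
      (cs.length w < cs.length (cs.simple i * w) → cs.simple i * w ∈ cs.DJ J →
        (Submodule.Quotient.mk (TT (cs.simple i) * TT w) : H ⧸ N) =
          Submodule.Quotient.mk (TT (cs.simple i * w))) ∧
      (cs.length w < cs.length (cs.simple i * w) → cs.simple i * w ∉ cs.DJ J →
        (Submodule.Quotient.mk (TT (cs.simple i) * TT w) : H ⧸ N) =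
          (-qAinv) • Submodule.Quotient.mk (TT w)) ∧
      (cs.length (cs.simple i * w) < cs.length w →
        (Submodule.Quotient.mk (TT (cs.simple i) * TT w) : H ⧸ N) =
          Submodule.Quotient.mk (TT (cs.simple i * w)) +
            (qA - qAinv) • Submodule.Quotient.mk (TT w))) := by
  have hT : cs.IsHeckeBasis TT (qA - qAinv) := ⟨hT1, hmul_up, hmul_down⟩
  have hN' : N = (cs.inductionIdeal TT J (-qAinv)).restrictScalars A := by
    simp only [hN, CoxeterSystem.inductionIdeal, neg_smul, sub_neg_eq_add]
  subst hN'
  refine ⟨⟨_, hT.inducedBasis_apply qA_sub_qAinv_ne_zero neg_qAinv_mul_self⟩, fun i w hw =>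
    ⟨fun hi _ => by rw [hmul_up i w hi],
     fun hi hiw => hT.mk_simple_mul_of_not_mem_DJ qA_sub_qAinv_ne_zero hw hi hiw,
     fun hi => by rw [hmul_down i w hi, Submodule.Quotient.mk_add, Submodule.Quotient.mk_smul]⟩⟩

end
end
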